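/- arXiv:math/0611798 — 5 statements merged into one kernel-verified Lean document; each statement's English description precedes it below -/
import Mathlib

section
/- Let n ≥ 2 and let X ⊆ (0,∞) have Property (W_n). Then for all x, y ∈ X one has x + y ∈ X. -/
open BoxIntegral

/-- The (closed) set of points of an `n`-dimensional box. -/
def boxSet {n : ℕ} (B : Box (Fin n)) : Set (Fin n → ℝ) :=
  Set.Icc B.lower B.upper

/-- The box `B` has a side whose length belongs to `X`. -/
def hasSideIn {n : ℕ} (X : Set ℝ) (B : Box (Fin n)) : Prop :=
  ∃ i : Fin n, B.upper i - B.lower i ∈ X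

/-- `Q` is a partition of `P`: a finite collection of boxes with pairwise disjoint
interiors whose union is `P`. -/
def isBoxPartition {n k : ℕ} (P : Box (Fin n)) (Q : Fin k → Box (Fin n)) : Prop :=
  (∀ j j' : Fin k, j ≠ j' →
    Disjoint (interior (boxSet (Q j))) (interior (boxSet (Q j')))) ∧
  (⋃ j, boxSet (Q j)) = boxSet P

/-- Property (W_n): for every `n`-dimensional box `P` and every partition of `P`
such that each constituent box has a side with length in `X`, the box `P` itself
has a side with length in `X`. -/
def PropertyW (n : ℕ) (X : Set ℝ) : Prop :=
  ∀ (P : Box (Fin n)) (k : ℕ) (Q : Fin k → Box (Fin n)),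
    isBoxPartition P Q → (∀ j, hasSideIn X (Q j)) → hasSideIn X P

lemma interior_boxIcc {n : ℕ} (l u : Fin n → ℝ) :
    interior (Set.Icc l u) = Set.pi Set.univ (fun i => Set.Ioo (l i) (u i)) := by
  rw [← Set.pi_univ_Icc, interior_pi_set Set.finite_univ]
  simp [interior_Icc]

theorem propertyW_add_closed (n : ℕ) (hn : 2 ≤ n) (X : Set ℝ) (hX : X ⊆ Set.Ioi 0)
    (hW : PropertyW n X) :
    ∀ x ∈ X, ∀ y ∈ X, x + y ∈ X := by
  intro x hx y hy
  have hx0 : (0:ℝ) < x := hX hx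
  have hy0 : (0:ℝ) < y := hX hy
  by_cases hall : ∀ t : ℝ, 0 < t → t ∈ X
  · exact hall _ (by linarith)
  push_neg at hall
  obtain ⟨t, ht, htX⟩ := hall
  set i0 : Fin n := ⟨0, by omega⟩ with hi0
  set P : Box (Fin n) :=
    ⟨0, fun i => if i = i0 then x + y else t, by
      intro i; simp only [Pi.zero_apply]; split <;> linarith⟩ with hP
  set Q : Fin 2 → Box (Fin n) :=
    ![⟨0, fun i => if i = i0 then x else t, by
        intro i; simp only [Pi.zero_apply]; split <;> linarith⟩,
      ⟨fun i => if i = i0 then x else 0, fun i => if i = i0 then x + y else t, by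
        intro i; split <;> linarith⟩] with hQ
  have hpart : isBoxPartition P Q := by
    constructor
    · have key : Disjoint (interior (boxSet (Q 0))) (interior (boxSet (Q 1))) := by
        rw [Set.disjoint_left]
        intro f hf hf'
        simp only [boxSet, interior_boxIcc, hQ, Matrix.cons_val_zero, Matrix.cons_val_one,
          Matrix.head_cons] at hf hf'
        have h1 := hf i0 (Set.mem_univ _)
        have h2 := hf' i0 (Set.mem_univ _)
        simp only [if_pos rfl, Pi.zero_apply] at h1 h2
        exact absurd h2.1 (not_lt.2 h1.2.le)
      intro j j' hne
      fin_cases j <;> fin_cases j' <;>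
        first
          | exact absurd rfl hne
          | exact key
          | exact key.symm
    · ext f
      simp only [Set.mem_iUnion, boxSet, Set.mem_Icc, Fin.exists_fin_two, hQ, hP,
        Matrix.cons_val_zero, Matrix.cons_val_one, Matrix.head_cons, Pi.le_def,
        Pi.zero_apply]
      constructor
      · rintro (⟨h1, h2⟩ | ⟨h1, h2⟩)
        · refine ⟨fun i => h1 i, fun i => ?_⟩
          have b := h2 i
          rcases eq_or_ne i i0 with h | h
          · subst h; rw [if_pos rfl] at b ⊢; linarith
          · rw [if_neg h] at b ⊢; linarith
        · refine ⟨fun i => ?_, fun i => h2 i⟩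
          have a := h1 i
          rcases eq_or_ne i i0 with h | h
          · subst h; rw [if_pos rfl] at a; linarith
          · rw [if_neg h] at a; exact a
      · rintro ⟨h1, h2⟩
        rcases le_or_gt (f i0) x with hc | hc
        · left
          refine ⟨h1, fun i => ?_⟩
          rcases eq_or_ne i i0 with h | h
          · subst h; rw [if_pos rfl]; exact hc
          · have := h2 i; rw [if_neg h] at this ⊢; exact this
        · right
          constructor <;> intro i <;> rcases eq_or_ne i i0 with h | h
          · subst h; rw [if_pos rfl]; exact hc.le
          · rw [if_neg h]; exact h1 i
          · subst h; have := h2 i0; rwa [if_pos rfl] at this ⊢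
          · have := h2 i; rwa [if_neg h] at this ⊢
  have hsides : ∀ j, hasSideIn X (Q j) := by
    intro j
    fin_cases j
    · exact ⟨i0, by simp [hQ, hasSideIn, hx]⟩
    · refine ⟨i0, ?_⟩
      simp only [hQ, hasSideIn, Matrix.cons_val_one, Matrix.head_cons, if_pos rfl]
      simpa using hy
  obtain ⟨i, hi⟩ := hW P 2 Q hpart hsides
  rcases eq_or_ne i i0 with h | h
  · subst h; simpa [hP] using hi
  · exfalso; apply htX; simpa [hP, if_neg h] using hi
end

section
/- Let n ≥ 2 and let X ⊆ (0,∞) have Property (W_n). Then for all x, y, z ∈ X one has x + y + z − 2·min(x,y,z) ∈ X. -/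
open BoxIntegral

/-! If `x ≤ y` and `x ≤ z`, the square of side `y + z - x` is tiled by a pinwheel: four
rectangles `y × (z - x)`, `(z - x) × z`, `z × (y - x)`, `(y - x) × y` turning around a central
`x × x` square. Every tile has a side of length `x`, `y` or `z`, and taking the product with a cube
of side `y + z - x` in the remaining `n - 2` coordinates turns the tiling into a partition of an
`n`-dimensional cube all of whose sides have length `y + z - x`. Property (W_n) therefore puts
`y + z - x = x + y + z - 2 * min x (min y z)` in `X`. -/

lemma interior_boxSet {n : ℕ} (B : Box (Fin n)) :
    interior (boxSet B) = Set.univ.pi fun i => Set.Ioo (B.lower i) (B.upper i) := by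
  rw [boxSet, ← Set.pi_univ_Icc, interior_pi_set Set.finite_univ]
  simp [interior_Icc]

namespace BoxIntegral.Box

def append {k m : ℕ} (B : Box (Fin k)) (C : Box (Fin m)) : Box (Fin (k + m)) where
  lower := Fin.append B.lower C.lower
  upper := Fin.append B.upper C.upper
  lower_lt_upper := Fin.addCases (by simp [B.lower_lt_upper]) (by simp [C.lower_lt_upper])

def rect (a₁ b₁ a₂ b₂ : ℝ) (h₁ : a₁ < b₁) (h₂ : a₂ < b₂) : Box (Fin 2) :=
  ⟨![a₁, a₂], ![b₁, b₂], Fin.forall_fin_two.2 ⟨h₁, h₂⟩⟩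

def cube (m : ℕ) {L : ℝ} (hL : 0 < L) : Box (Fin m) :=
  ⟨0, fun _ => L, fun _ => hL⟩

end BoxIntegral.Box

section append

variable {k m : ℕ} {B : Box (Fin k)} {C : Box (Fin m)}

lemma mem_boxSet_append {p : Fin (k + m) → ℝ} :
    p ∈ boxSet (B.append C) ↔
      (fun i => p (Fin.castAdd m i)) ∈ boxSet B ∧ (fun i => p (Fin.natAdd k i)) ∈ boxSet C := by
  simp only [boxSet, Set.mem_Icc, Pi.le_def, Fin.forall_fin_add, Box.append, Fin.append_left,
    Fin.append_right]
  tauto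

lemma mem_interior_boxSet_append {p : Fin (k + m) → ℝ} :
    p ∈ interior (boxSet (B.append C)) ↔
      (fun i => p (Fin.castAdd m i)) ∈ interior (boxSet B) ∧
        (fun i => p (Fin.natAdd k i)) ∈ interior (boxSet C) := by
  simp only [interior_boxSet, Set.mem_univ_pi, Fin.forall_fin_add, Box.append, Fin.append_left,
    Fin.append_right]

lemma hasSideIn_append {X : Set ℝ} :
    hasSideIn X (B.append C) ↔ hasSideIn X B ∨ hasSideIn X C := by
  refine ⟨fun ⟨i, hi⟩ => ?_, ?_⟩
  · induction i using Fin.addCases with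
    | left i => exact .inl ⟨i, by simpa [Box.append] using hi⟩
    | right i => exact .inr ⟨i, by simpa [Box.append] using hi⟩
  · rintro (⟨i, hi⟩ | ⟨i, hi⟩)
    · exact ⟨Fin.castAdd m i, by simpa [Box.append] using hi⟩
    · exact ⟨Fin.natAdd k i, by simpa [Box.append] using hi⟩

lemma isBoxPartition.append {l : ℕ} {Q : Fin l → Box (Fin k)} (hQ : isBoxPartition B Q)
    (C : Box (Fin m)) : isBoxPartition (B.append C) fun j => (Q j).append C := by
  refine ⟨fun j j' hjj' => Set.disjoint_left.2 fun p hp hp' => ?_, ?_⟩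
  · rw [mem_interior_boxSet_append] at hp hp'
    exact Set.disjoint_left.1 (hQ.1 j j' hjj') hp.1 hp'.1
  · ext p
    simp only [Set.mem_iUnion, mem_boxSet_append, ← hQ.2]
    tauto

end append

lemma mem_boxSet_fin_two {B : Box (Fin 2)} {p : Fin 2 → ℝ} :
    p ∈ boxSet B ↔
      (B.lower 0 ≤ p 0 ∧ p 0 ≤ B.upper 0) ∧ B.lower 1 ≤ p 1 ∧ p 1 ≤ B.upper 1 := by
  simp only [boxSet, Set.mem_Icc, Pi.le_def, Fin.forall_fin_two]
  tauto

lemma mem_interior_boxSet_fin_two {B : Box (Fin 2)} {p : Fin 2 → ℝ} :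
    p ∈ interior (boxSet B) ↔
      (B.lower 0 < p 0 ∧ p 0 < B.upper 0) ∧ B.lower 1 < p 1 ∧ p 1 < B.upper 1 := by
  simp only [interior_boxSet, Set.mem_univ_pi, Set.mem_Ioo, Fin.forall_fin_two]

lemma mem_of_hasSideIn_cube {X : Set ℝ} {m : ℕ} {L : ℝ} {hL : 0 < L}
    (h : hasSideIn X (Box.cube m hL)) : L ∈ X := by
  obtain ⟨i, hi⟩ := h
  simpa [Box.cube] using hi

section pinwheel

variable {x y z : ℝ}

def pinwheel (hx : 0 < x) (hxy : x < y) (hxz : x < z) : Fin 5 → Box (Fin 2) :=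
  ![Box.rect 0 y 0 (z - x) (by linarith) (by linarith),
    Box.rect y (y + z - x) 0 z (by linarith) (by linarith),
    Box.rect (y - x) (y + z - x) z (y + z - x) (by linarith) (by linarith),
    Box.rect 0 (y - x) (z - x) (y + z - x) (by linarith) (by linarith),
    Box.rect (y - x) y (z - x) z (by linarith) (by linarith)]

lemma isBoxPartition_pinwheel (hx : 0 < x) (hxy : x < y) (hxz : x < z) :
    isBoxPartition (Box.rect 0 (y + z - x) 0 (y + z - x) (by linarith) (by linarith))
      (pinwheel hx hxy hxz) := by
  refine ⟨fun j j' hjj' => Set.disjoint_left.2 fun p hp hp' => ?_, ?_⟩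
  · fin_cases j <;> fin_cases j' <;>
      simp only [pinwheel, Box.rect, mem_interior_boxSet_fin_two, Fin.zero_eta, Fin.mk_one,
        Fin.reduceFinMk, Matrix.cons_val] at hp hp' <;>
      first
      | exact hjj' rfl
      | linarith [hp.1.1, hp.1.2, hp.2.1, hp.2.2, hp'.1.1, hp'.1.2, hp'.2.1, hp'.2.2]
  ext p
  simp only [Set.mem_iUnion, mem_boxSet_fin_two, Box.rect, Matrix.cons_val_zero,
    Matrix.cons_val_one]
  constructor
  · rintro ⟨j, hj⟩
    fin_cases j <;>
      simp only [pinwheel, Box.rect, Fin.zero_eta, Fin.mk_one, Fin.reduceFinMk,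
        Matrix.cons_val] at hj <;>
      refine ⟨⟨?_, ?_⟩, ?_, ?_⟩ <;> linarith [hj.1.1, hj.1.2, hj.2.1, hj.2.2]
  rintro ⟨⟨hu₀, huL⟩, hv₀, hvL⟩
  rcases le_or_gt (p 1) (z - x) with hv | hv
  · rcases le_or_gt (p 0) y with hu | hu
    · exact ⟨0, ⟨hu₀, hu⟩, hv₀, hv⟩
    · exact ⟨1, ⟨hu.le, huL⟩, hv₀, show p 1 ≤ z by linarith⟩
  rcases le_or_gt (p 0) (y - x) with hu | hu
  · exact ⟨3, ⟨hu₀, hu⟩, hv.le, hvL⟩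
  rcases le_or_gt (p 1) z with hw | hw
  · rcases le_or_gt (p 0) y with hu' | hu'
    · exact ⟨4, ⟨hu.le, hu'⟩, hv.le, hw⟩
    · exact ⟨1, ⟨hu'.le, huL⟩, hv₀, hw⟩
  · exact ⟨2, ⟨hu.le, huL⟩, hw.le, hvL⟩

lemma hasSideIn_pinwheel {X : Set ℝ} (hx : x ∈ X) (hy : y ∈ X) (hz : z ∈ X) (hx₀ : 0 < x)
    (hxy : x < y) (hxz : x < z) (j : Fin 5) : hasSideIn X (pinwheel hx₀ hxy hxz j) := by
  fin_cases j <;> simp [pinwheel, hasSideIn, Box.rect, Fin.exists_fin_two, *]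

end pinwheel

namespace PropertyW

variable {m : ℕ} {X : Set ℝ} {x y z : ℝ}

lemma add_sub_mem (hW : PropertyW (2 + m) X) (hx : x ∈ X) (hy : y ∈ X) (hz : z ∈ X)
    (hx₀ : 0 < x) (hxy : x < y) (hxz : x < z) : y + z - x ∈ X := by
  have hL : 0 < y + z - x := by linarith
  have hP := hW _ _ _ ((isBoxPartition_pinwheel hx₀ hxy hxz).append (Box.cube m hL))
    fun j => hasSideIn_append.2 (.inl (hasSideIn_pinwheel hx hy hz hx₀ hxy hxz j))
  rcases hasSideIn_append.1 hP with ⟨i, hi⟩ | hC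
  · fin_cases i <;> simpa [Box.rect] using hi
  · exact mem_of_hasSideIn_cube hC

lemma add_sub_mem_of_le (hW : PropertyW (2 + m) X) (hX : X ⊆ Set.Ioi 0) (hx : x ∈ X)
    (hy : y ∈ X) (hz : z ∈ X) (hxy : x ≤ y) (hxz : x ≤ z) : y + z - x ∈ X := by
  rcases hxy.eq_or_lt with rfl | hxy
  · simpa using hz
  rcases hxz.eq_or_lt with rfl | hxz
  · simpa using hy
  exact hW.add_sub_mem hx hy hz (hX hx) hxy hxz

end PropertyW

theorem propertyW_tripod_closed (n : ℕ) (hn : 2 ≤ n) (X : Set ℝ) (hX : X ⊆ Set.Ioi 0)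
    (hW : PropertyW n X) :
    ∀ x ∈ X, ∀ y ∈ X, ∀ z ∈ X, x + y + z - 2 * min x (min y z) ∈ X := by
  obtain ⟨m, rfl⟩ := Nat.exists_eq_add_of_le hn
  intro x hx y hy z hz
  rcases le_total x (min y z) with h | h
  · rw [min_eq_left h]
    convert hW.add_sub_mem_of_le hX hx hy hz (h.trans (min_le_left y z))
      (h.trans (min_le_right y z)) using 1
    ring
  rw [min_eq_right h]
  rcases le_total y z with h' | h'
  · rw [min_eq_left h'] at h ⊢
    convert hW.add_sub_mem_of_le hX hy hx hz h h' using 1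
    ring
  · rw [min_eq_right h'] at h ⊢
    convert hW.add_sub_mem_of_le hX hz hx hy h h' using 1
    ring
end

section
/- Let n ≥ 2 and let X ⊆ (0,∞) be closed under the two operations (x,y) ↦ x+y and (x,y,z) ↦ x+y+z−2·min(x,y,z). Then X has Property (W_n): for every n-dimensional box P and every partition of P into boxes each of which has a side with length in X, the box P has a side with length in X. -/
open BoxIntegral

namespace WPf

/-- The grid of `i`-th coordinates of all the boxes involved. -/
noncomputable def grid {n k : ℕ} (P : Box (Fin n)) (Q : Fin k → Box (Fin n)) (i : Fin n) :
    Finset ℝ :=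
  ({P.lower i, P.upper i} : Finset ℝ) ∪
    Finset.image (fun j => (Q j).lower i) Finset.univ ∪
    Finset.image (fun j => (Q j).upper i) Finset.univ

lemma P_lower_mem_grid {n k : ℕ} (P : Box (Fin n)) (Q : Fin k → Box (Fin n)) (i : Fin n) :
    P.lower i ∈ grid P Q i := by simp [grid]

lemma P_upper_mem_grid {n k : ℕ} (P : Box (Fin n)) (Q : Fin k → Box (Fin n)) (i : Fin n) :
    P.upper i ∈ grid P Q i := by simp [grid]

lemma Q_lower_mem_grid {n k : ℕ} (P : Box (Fin n)) (Q : Fin k → Box (Fin n)) (j : Fin k)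
    (i : Fin n) : (Q j).lower i ∈ grid P Q i := by
  simp only [grid, Finset.mem_union]
  exact Or.inl (Or.inr (Finset.mem_image.mpr ⟨j, Finset.mem_univ j, rfl⟩))

lemma Q_upper_mem_grid {n k : ℕ} (P : Box (Fin n)) (Q : Fin k → Box (Fin n)) (j : Fin k)
    (i : Fin n) : (Q j).upper i ∈ grid P Q i := by
  simp only [grid, Finset.mem_union]
  exact Or.inr (Finset.mem_image.mpr ⟨j, Finset.mem_univ j, rfl⟩)

/-- `t` is reachable from `P.lower i` by a chain of grid points with `X`-steps. -/
def reach {n k : ℕ} (X : Set ℝ) (P : Box (Fin n)) (Q : Fin k → Box (Fin n)) (i : Fin n)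
    (t : ℝ) : Prop :=
  ∃ (p : ℕ) (a : ℕ → ℝ), a 0 = P.lower i ∧ a p = t ∧
    (∀ m, m ≤ p → a m ∈ grid P Q i) ∧ (∀ m, m < p → |a (m+1) - a m| ∈ X)

open Classical in
noncomputable def phi {n k : ℕ} (X : Set ℝ) (P : Box (Fin n)) (Q : Fin k → Box (Fin n))
    (i : Fin n) (t : ℝ) : ℝ :=
  if reach X P Q i t then 1 else 0

noncomputable def predc {n k : ℕ} (P : Box (Fin n)) (Q : Fin k → Box (Fin n)) (i : Fin n)
    (t : ℝ) : ℝ :=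
  if h : ((grid P Q i).filter (fun s => s < t)).Nonempty
  then ((grid P Q i).filter (fun s => s < t)).max' h else t

noncomputable def w {n k : ℕ} (X : Set ℝ) (P : Box (Fin n)) (Q : Fin k → Box (Fin n))
    (i : Fin n) (t : ℝ) : ℝ :=
  phi X P Q i t - phi X P Q i (predc P Q i t)

noncomputable def K {n k : ℕ} (X : Set ℝ) (P : Box (Fin n)) (Q : Fin k → Box (Fin n))
    (i : Fin n) (l u : ℝ) : ℝ :=
  ∑ t ∈ (grid P Q i).filter (fun t => t ∈ Set.Ioc l u), w X P Q i t

lemma reach_step {n k : ℕ} (X : Set ℝ) (P : Box (Fin n)) (Q : Fin k → Box (Fin n)) (i : Fin n)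
    {t t' : ℝ} (ht' : t' ∈ grid P Q i) (hstep : |t' - t| ∈ X) :
    reach X P Q i t → reach X P Q i t' := by
  rintro ⟨p, a, h0, hp, hg, hs⟩
  refine ⟨p + 1, fun m => if m ≤ p then a m else t', by simp [h0], by simp, ?_, ?_⟩
  · intro m hm
    by_cases hmp : m ≤ p
    · simpa [hmp] using hg m hmp
    · simpa [hmp] using ht'
  · intro m hm
    rcases Nat.lt_or_ge m p with hmp | hmp
    · have e1 : m ≤ p := by omega
      have e2 : m + 1 ≤ p := by omega
      simpa [e1, e2] using hs m hmp
    · have hmp' : m = p := by omega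
      subst hmp'
      have e2 : ¬ (m + 1 ≤ m) := by omega
      simpa [e2, hp] using hstep

lemma phi_eq_of_step {n k : ℕ} (X : Set ℝ) (P : Box (Fin n)) (Q : Fin k → Box (Fin n))
    (i : Fin n) {l u : ℝ} (hl : l ∈ grid P Q i) (hu : u ∈ grid P Q i)
    (hstep : |u - l| ∈ X) : phi X P Q i l = phi X P Q i u := by
  unfold phi
  by_cases h : reach X P Q i l
  · rw [if_pos h, if_pos (reach_step X P Q i hu hstep h)]
  · rw [if_neg h, if_neg (fun h' => h (reach_step X P Q i hl (by rwa [abs_sub_comm]) h'))]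

/-- Telescoping: `K` computes the increment of `phi` between grid points. -/
lemma K_eq {n k : ℕ} (X : Set ℝ) (P : Box (Fin n)) (Q : Fin k → Box (Fin n)) (i : Fin n) :
    ∀ c : ℕ, ∀ l ∈ grid P Q i, ∀ u ∈ grid P Q i, l ≤ u →
      ((grid P Q i).filter (fun t => t ∈ Set.Ioc l u)).card ≤ c →
      K X P Q i l u = phi X P Q i u - phi X P Q i l := by
  intro c
  induction c with
  | zero =>
    intro l hl u hu hlu hcard
    have hempty : (grid P Q i).filter (fun t => t ∈ Set.Ioc l u) = ∅ :=
      Finset.card_eq_zero.mp (Nat.le_zero.mp hcard)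
    have hul : u = l := by
      by_contra hne
      have hltu : l < u := lt_of_le_of_ne hlu (Ne.symm hne)
      have : u ∈ (grid P Q i).filter (fun t => t ∈ Set.Ioc l u) :=
        Finset.mem_filter.mpr ⟨hu, ⟨hltu, le_refl u⟩⟩
      rw [hempty] at this
      exact absurd this (Finset.notMem_empty u)
    subst hul
    rw [K, hempty, Finset.sum_empty, sub_self]
  | succ c ih =>
    intro l hl u hu hlu hcard
    by_cases hS : ((grid P Q i).filter (fun t => t ∈ Set.Ioc l u)).Nonempty
    · set S := (grid P Q i).filter (fun t => t ∈ Set.Ioc l u) with hSdef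
      set m := S.min' hS with hmdef
      have hmS : m ∈ S := Finset.min'_mem S hS
      have hmfacts := Finset.mem_filter.mp hmS
      have hmg : m ∈ grid P Q i := hmfacts.1
      have hlm : l < m := hmfacts.2.1
      have hmu : m ≤ u := hmfacts.2.2
      -- pred of m is l
      have hne : ((grid P Q i).filter (fun s => s < m)).Nonempty :=
        ⟨l, Finset.mem_filter.mpr ⟨hl, hlm⟩⟩
      have hpredm : predc P Q i m = l := by
        rw [predc, dif_pos hne]
        apply le_antisymm
        · by_contra hgt
          push_neg at hgt
          have hmax := Finset.max'_mem _ hne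
          rw [Finset.mem_filter] at hmax
          have hmem : ((grid P Q i).filter (fun s => s < m)).max' hne ∈ S :=
            Finset.mem_filter.mpr ⟨hmax.1, ⟨hgt, le_trans (le_of_lt hmax.2) hmu⟩⟩
          have := Finset.min'_le S _ hmem
          rw [← hmdef] at this
          linarith [hmax.2]
        · exact Finset.le_max' _ l
            (Finset.mem_filter.mpr ⟨hl, hlm⟩ : l ∈ (grid P Q i).filter (fun s => s < m))
      have herase : S.erase m = (grid P Q i).filter (fun t => t ∈ Set.Ioc m u) := by
        ext t
        simp only [Finset.mem_erase, hSdef, Finset.mem_filter, Set.mem_Ioc]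
        constructor
        · rintro ⟨htm, htg, hlt, htu⟩
          refine ⟨htg, ?_, htu⟩
          have := Finset.min'_le S t (Finset.mem_filter.mpr ⟨htg, ⟨hlt, htu⟩⟩)
          rw [← hmdef] at this
          exact lt_of_le_of_ne this (Ne.symm htm)
        · rintro ⟨htg, hmt, htu⟩
          exact ⟨ne_of_gt hmt, htg, lt_trans hlm hmt, htu⟩
      have hcard' : ((grid P Q i).filter (fun t => t ∈ Set.Ioc m u)).card ≤ c := by
        rw [← herase]
        have := Finset.card_erase_of_mem hmS
        omega
      have hKmu := ih m hmg u hu hmu hcard'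
      have hsplit : K X P Q i l u = w X P Q i m + K X P Q i m u := by
        rw [K, K, ← herase, ← hSdef]
        exact (Finset.add_sum_erase S (w X P Q i) hmS).symm
      rw [hsplit, hKmu, w, hpredm]
      ring
    · -- empty: same as base case
      rw [Finset.not_nonempty_iff_eq_empty] at hS
      have hul : u = l := by
        by_contra hne
        have hltu : l < u := lt_of_le_of_ne hlu (Ne.symm hne)
        have : u ∈ (grid P Q i).filter (fun t => t ∈ Set.Ioc l u) :=
          Finset.mem_filter.mpr ⟨hu, ⟨hltu, le_refl u⟩⟩
        rw [hS] at this
        exact absurd this (Finset.notMem_empty u)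
      subst hul
      rw [K, hS, Finset.sum_empty, sub_self]

end WPf



/-- 1-D chain lemma: if there is a finite chain `a 0 = 0, …, a p` staying in
`[0, a p]` whose consecutive steps have absolute values in `X`, then `a p ∈ X`. -/
theorem chain_lemma (X : Set ℝ) (hX : X ⊆ Set.Ioi 0)
    (hadd : ∀ x ∈ X, ∀ y ∈ X, x + y ∈ X)
    (hop : ∀ x ∈ X, ∀ y ∈ X, ∀ z ∈ X, x + y + z - 2 * min x (min y z) ∈ X) :
    ∀ p : ℕ, ∀ a : ℕ → ℝ, 0 < p → a 0 = 0 →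
      (∀ i, i ≤ p → 0 ≤ a i ∧ a i ≤ a p) → (∀ i, i < p → |a (i+1) - a i| ∈ X) →
      a p ∈ X := by
  have hop2 : ∀ x ∈ X, ∀ y ∈ X, ∀ z ∈ X, z ≤ x → z ≤ y → x + y - z ∈ X := by
    intro x hx y hy z hz hzx hzy
    have h := hop x hx y hy z hz
    have h2 : x + y + z - 2 * z = x + y - z := by ring
    rwa [min_eq_right hzy, min_eq_right hzx, h2] at h
  have habs : ∀ u v : ℝ, 0 < u * v → |u + v| = |u| + |v| := by
    intro u v huv
    rcases mul_pos_iff.mp huv with ⟨hu, hv⟩ | ⟨hu, hv⟩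
    · rw [abs_of_pos hu, abs_of_pos hv, abs_of_pos (by linarith)]
    · rw [abs_of_neg hu, abs_of_neg hv, abs_of_neg (by linarith)]; ring
  intro p
  induction p using Nat.strong_induction_on with
  | _ p ih =>
  intro a hp h0 hbd hstep
  rcases Nat.lt_or_ge p 2 with hp2 | hp2
  · -- p = 1
    have hp1 : p = 1 := by omega
    subst hp1
    have h := hstep 0 (by omega)
    rw [h0, sub_zero] at h
    rwa [abs_of_nonneg (hbd 1 le_rfl).1] at h
  -- p ≥ 2
  by_cases hB : ∃ i, 0 < i ∧ i < p ∧ a i = 0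
  · obtain ⟨i, hi0, hip, hai⟩ := hB
    have key : a (i + (p - i)) ∈ X := by
      apply ih (p - i) (by omega) (fun m => a (i + m)) (by omega) (by simpa using hai)
      · intro m hm
        have hip' : i + (p - i) = p := by omega
        refine ⟨(hbd (i + m) (by omega)).1, ?_⟩
        simpa [hip'] using (hbd (i + m) (by omega)).2
      · intro m hm
        have h := hstep (i + m) (by omega)
        have e : i + (m + 1) = i + m + 1 := by omega
        simpa [e] using h
    have hip' : i + (p - i) = p := by omega
    rwa [hip'] at key
  by_cases hC : ∃ i, 0 < i ∧ i < p ∧ a i = a p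
  · obtain ⟨i, hi0, hip, hai⟩ := hC
    rw [← hai]
    apply ih i (by omega) a hi0 h0
    · intro m hm
      rw [hai]
      exact hbd m (by omega)
    · intro m hm
      exact hstep m (by omega)
  by_cases hA : ∃ i, i + 2 ≤ p ∧ 0 < (a (i+1) - a i) * (a (i+2) - a (i+1))
  · obtain ⟨i, hi2, hsgn⟩ := hA
    have hpe : ¬ (p - 1 ≤ i) := by omega
    have hp1 : p - 1 + 1 = p := by omega
    have hbd' : ∀ m, m ≤ p - 1 → 0 ≤ (if m ≤ i then a m else a (m+1)) ∧
        (if m ≤ i then a m else a (m+1)) ≤ (if p - 1 ≤ i then a (p-1) else a (p-1+1)) := by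
      intro m hm
      simp only [if_neg hpe, hp1]
      by_cases hmi : m ≤ i
      · simp only [hmi, if_true]; exact hbd m (by omega)
      · simp only [if_neg hmi]; exact hbd (m+1) (by omega)
    have hstep' : ∀ m, m < p - 1 →
        |(if m + 1 ≤ i then a (m+1) else a (m+1+1)) - (if m ≤ i then a m else a (m+1))| ∈ X := by
      intro m hm
      rcases lt_trichotomy m i with hmi | hmi | hmi
      · have e1 : m ≤ i := by omega
        have e2 : m + 1 ≤ i := by omega
        simp only [e1, e2, if_true]
        exact hstep m (by omega)
      · subst hmi
        have e2 : ¬ (m + 1 ≤ m) := by omega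
        simp only [le_refl, if_true, if_neg e2]
        have h3 : a (m+1+1) - a m = (a (m+1) - a m) + (a (m+2) - a (m+1)) := by
          have e : m + 1 + 1 = m + 2 := by ring
          rw [e]; ring
        rw [h3, habs _ _ hsgn]
        exact hadd _ (hstep m (by omega)) _ (hstep (m+1) (by omega))
      · have e1 : ¬ (m ≤ i) := by omega
        have e2 : ¬ (m + 1 ≤ i) := by omega
        simp only [if_neg e1, if_neg e2]
        have := hstep (m+1) (by omega)
        simpa [show m + 1 + 1 = m + 2 from by omega] using this
    have key := ih (p - 1) (by omega) (fun m => if m ≤ i then a m else a (m+1))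
      (by omega) (by simp [h0]) hbd' hstep'
    simp only [if_neg hpe, hp1] at key
    exact key
  -- Case D: strictly alternating, interior points strictly inside (0, a p)
  push_neg at hA hB hC
  have hne : ∀ i, i < p → a (i+1) - a i ≠ 0 := by
    intro i hi h
    have := hX (hstep i hi)
    rw [h, abs_zero] at this
    exact lt_irrefl 0 (Set.mem_Ioi.mp this)
  have halt : ∀ i, i + 2 ≤ p → (a (i+1) - a i) * (a (i+2) - a (i+1)) < 0 := by
    intro i hi
    rcases lt_or_eq_of_le (hA i hi) with h | h
    · exact h
    · exfalso
      have hne2 := mul_ne_zero (hne i (by omega)) (hne (i+1) (by omega))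
      rw [show i + 1 + 1 = i + 2 from by omega] at hne2
      exact hne2 h
  obtain ⟨j, hjmem, hjmin⟩ := Finset.exists_min_image (Finset.range p)
    (fun i => |a (i+1) - a i|) ⟨0, Finset.mem_range.mpr hp⟩
  have hj : j < p := Finset.mem_range.mp hjmem
  have hjmin' : ∀ i, i < p → |a (j+1) - a j| ≤ |a (i+1) - a i| := by
    intro i hi; exact hjmin i (Finset.mem_range.mpr hi)
  rcases Nat.eq_zero_or_pos j with hj0 | hj0
  · -- j = 0 : contradiction
    subst hj0
    exfalso
    have ha1 : 0 < a 1 := by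
      rcases (hne 0 (by omega)).lt_or_gt with h | h
      · have h1 := (hbd 1 (by omega)).1
        rw [h0] at h
        linarith
      · rw [h0] at h
        linarith
    have hs0 : 0 < a 1 - a 0 := by rw [h0]; linarith
    have hs1 : a 2 - a 1 < 0 := by
      have := halt 0 (by omega)
      nlinarith
    have hmin01 := hjmin' 1 (by omega)
    rw [abs_of_pos hs0, abs_of_neg hs1] at hmin01
    have ha2 : a 2 ≤ 0 := by rw [h0] at hmin01; linarith
    have ha2' : a 2 = 0 := le_antisymm ha2 (hbd 2 (by omega)).1
    rcases Nat.lt_or_ge 2 p with h2p | h2p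
    · exact hB 2 (by omega) h2p ha2'
    · -- p = 2
      have hpp : p = 2 := by omega
      have hle := (hbd 1 (by omega)).2
      rw [hpp] at hle
      rw [ha2'] at hle
      linarith
  rcases Nat.lt_or_ge (j + 1) p with hjp | hjp
  · -- interior: 1 ≤ j, j + 1 < p : reduce with the ternary operation
    obtain ⟨j', rfl⟩ : ∃ j', j = j' + 1 := ⟨j - 1, by omega⟩
    set s0 := a (j'+1) - a j' with hs0def
    set s1 := a (j'+2) - a (j'+1) with hs1def
    set s2 := a (j'+3) - a (j'+2) with hs2def
    have halt1 : s0 * s1 < 0 := halt j' (by omega)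
    have halt2 : s1 * s2 < 0 := by
      have := halt (j'+1) (by omega)
      simpa [show j' + 1 + 1 = j' + 2 from by omega, show j' + 1 + 2 = j' + 3 from by omega]
        using this
    have hmin0 : |s1| ≤ |s0| := by
      have := hjmin' j' (by omega)
      simpa [show j' + 1 + 1 = j' + 2 from by omega] using this
    have hmin2 : |s1| ≤ |s2| := by
      have := hjmin' (j'+2) (by omega)
      simpa [show j' + 1 + 1 = j' + 2 from by omega, show j' + 2 + 1 = j' + 3 from by omega]
        using this
    have hmem0 : |s0| ∈ X := hstep j' (by omega)
    have hmem1 : |s1| ∈ X := by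
      have := hstep (j'+1) (by omega)
      simpa [show j' + 1 + 1 = j' + 2 from by omega] using this
    have hmem2 : |s2| ∈ X := by
      have := hstep (j'+2) (by omega)
      simpa [show j' + 2 + 1 = j' + 3 from by omega] using this
    have hsum : |s0 + s1 + s2| ∈ X := by
      have hmem : |s0| + |s2| - |s1| ∈ X := hop2 _ hmem0 _ hmem2 _ hmem1 hmin0 hmin2
      rcases mul_neg_iff.mp halt1 with ⟨h0p, h1n⟩ | ⟨h0n, h1p⟩
      · have h2p : 0 < s2 := by
          rcases mul_neg_iff.mp halt2 with ⟨h1p, _⟩ | ⟨_, h2p⟩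
          · linarith
          · exact h2p
        have : |s0 + s1 + s2| = |s0| + |s2| - |s1| := by
          rw [abs_of_pos h0p, abs_of_pos h2p, abs_of_neg h1n]
          rw [abs_of_pos (by rw [abs_of_pos h0p, abs_of_neg h1n] at hmin0; linarith)]
          ring
        rwa [this]
      · have h2n : s2 < 0 := by
          rcases mul_neg_iff.mp halt2 with ⟨_, h2n⟩ | ⟨h1n, _⟩
          · exact h2n
          · linarith
        have : |s0 + s1 + s2| = |s0| + |s2| - |s1| := by
          rw [abs_of_neg h0n, abs_of_neg h2n, abs_of_pos h1p]
          rw [abs_of_neg (by rw [abs_of_neg h0n, abs_of_pos h1p] at hmin0; linarith)]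
          ring
        rwa [this]
    have hpe : ¬ (p - 2 ≤ j') := by omega
    have hp2' : p - 2 + 2 = p := by omega
    have hbd' : ∀ m, m ≤ p - 2 → 0 ≤ (if m ≤ j' then a m else a (m+2)) ∧
        (if m ≤ j' then a m else a (m+2)) ≤ (if p - 2 ≤ j' then a (p-2) else a (p-2+2)) := by
      intro m hm
      simp only [if_neg hpe, hp2']
      by_cases hmi : m ≤ j'
      · simp only [hmi, if_true]; exact hbd m (by omega)
      · simp only [if_neg hmi]; exact hbd (m+2) (by omega)
    have hstep' : ∀ m, m < p - 2 →
        |(if m + 1 ≤ j' then a (m+1) else a (m+1+2)) - (if m ≤ j' then a m else a (m+2))| ∈ X := by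
      intro m hm
      rcases lt_trichotomy m j' with hmi | hmi | hmi
      · have e1 : m ≤ j' := by omega
        have e2 : m + 1 ≤ j' := by omega
        simp only [e1, e2, if_true]
        exact hstep m (by omega)
      · subst hmi
        have e2 : ¬ (m + 1 ≤ m) := by omega
        simp only [le_refl, if_true, if_neg e2]
        have h3 : a (m+1+2) - a m = s0 + s1 + s2 := by
          rw [hs0def, hs1def, hs2def]
          have e : m + 1 + 2 = m + 3 := by ring
          rw [e]; ring
        rw [h3]
        exact hsum
      · have e1 : ¬ (m ≤ j') := by omega
        have e2 : ¬ (m + 1 ≤ j') := by omega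
        simp only [if_neg e1, if_neg e2]
        have := hstep (m+2) (by omega)
        simpa [show m + 2 + 1 = m + 1 + 2 from by omega] using this
    have key := ih (p - 2) (by omega) (fun m => if m ≤ j' then a m else a (m+2))
      (by omega) (by simp [h0]) hbd' hstep'
    simp only [if_neg hpe, hp2'] at key
    exact key
  · -- j = p - 1 : contradiction
    exfalso
    have hjp1 : j + 1 = p := by omega
    have hslast : 0 < a (j+1) - a j := by
      rcases (hne j hj).lt_or_gt with h | h
      · have := (hbd j (by omega)).2; rw [hjp1] at h; linarith
      · exact h
    -- j ≥ 1, so previous step exists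
    obtain ⟨j', rfl⟩ : ∃ j', j = j' + 1 := ⟨j - 1, by omega⟩
    have hsprev : a (j'+1+1) - a (j'+1) = a (j'+2) - a (j'+1) := by
      norm_num [show j' + 1 + 1 = j' + 2 from by omega]
    have hsp : a (j'+2) - a (j'+1) = a (j'+1+1) - a (j'+1) := hsprev.symm
    have hsn : a (j'+1) - a j' < 0 := by
      have := halt j' (by omega)
      nlinarith [hslast, hsprev]
    have hminp := hjmin' j' (by omega)
    rw [abs_of_pos (by rw [hsprev] at hslast ⊢; exact hslast : (0:ℝ) < a (j'+1+1) - a (j'+1)),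
      abs_of_neg hsn] at hminp
    -- a j' = a p
    have hap : a j' = a p := by
      have hb1 := (hbd j' (by omega)).2
      have : a p ≤ a j' := by
        rw [← hjp1]
        have e : j' + 1 + 1 = j' + 2 := by omega
        rw [e]
        have := hslast
        rw [hsprev] at this
        linarith
      linarith
    rcases Nat.eq_zero_or_pos j' with hj'0 | hj'0
    · subst hj'0
      norm_num at hsn
      have h1 := (hbd 1 (by omega)).1
      rw [h0] at hsn
      linarith
    · exact hC j' hj'0 (by omega) hap

namespace WPf

lemma boxSet_subset {n k : ℕ} (P : Box (Fin n)) (Q : Fin k → Box (Fin n))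
    (hpart : isBoxPartition P Q) (j : Fin k) : boxSet (Q j) ⊆ boxSet P := by
  rw [← hpart.2]
  exact Set.subset_iUnion (fun j => boxSet (Q j)) j

lemma lower_mem_boxSet {n : ℕ} (B : Box (Fin n)) : B.lower ∈ boxSet B := by
  rw [boxSet, Set.mem_Icc]
  exact ⟨le_refl _, fun i => (B.lower_lt_upper i).le⟩

lemma upper_mem_boxSet {n : ℕ} (B : Box (Fin n)) : B.upper ∈ boxSet B := by
  rw [boxSet, Set.mem_Icc]
  exact ⟨fun i => (B.lower_lt_upper i).le, le_refl _⟩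

lemma coord_bounds {n k : ℕ} (P : Box (Fin n)) (Q : Fin k → Box (Fin n))
    (hpart : isBoxPartition P Q) (j : Fin k) (i : Fin n) :
    P.lower i ≤ (Q j).lower i ∧ (Q j).upper i ≤ P.upper i := by
  have h1 := boxSet_subset P Q hpart j (lower_mem_boxSet (Q j))
  have h2 := boxSet_subset P Q hpart j (upper_mem_boxSet (Q j))
  rw [boxSet, Set.mem_Icc] at h1 h2
  exact ⟨h1.1 i, h2.2 i⟩

lemma grid_subset {n k : ℕ} (P : Box (Fin n)) (Q : Fin k → Box (Fin n))
    (hpart : isBoxPartition P Q) (i : Fin n) :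
    ∀ t ∈ grid P Q i, P.lower i ≤ t ∧ t ≤ P.upper i := by
  intro t ht
  simp only [grid, Finset.mem_union, Finset.mem_insert, Finset.mem_singleton,
    Finset.mem_image, Finset.mem_univ, true_and] at ht
  rcases ht with ((h | h) | ⟨j, rfl⟩) | ⟨j, rfl⟩
  · subst h; exact ⟨le_refl _, (P.lower_lt_upper i).le⟩
  · subst h; exact ⟨(P.lower_lt_upper i).le, le_refl _⟩
  · have h := coord_bounds P Q hpart j i
    exact ⟨h.1, le_trans ((Q j).lower_lt_upper i).le h.2⟩
  · have h := coord_bounds P Q hpart j i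
    exact ⟨le_trans h.1 ((Q j).lower_lt_upper i).le, h.2⟩

lemma mem_interior_boxSet {n : ℕ} (B : Box (Fin n)) (y : Fin n → ℝ)
    (hy : ∀ i, B.lower i < y i ∧ y i < B.upper i) : y ∈ interior (boxSet B) := by
  rw [boxSet, ← Set.pi_univ_Icc, interior_pi_set Set.finite_univ, Set.mem_univ_pi]
  intro i
  rw [interior_Icc]
  exact ⟨(hy i).1, (hy i).2⟩

lemma halfopen_unique {n k : ℕ} [Nonempty (Fin n)] (P : Box (Fin n)) (Q : Fin k → Box (Fin n))
    (hpart : isBoxPartition P Q) {j j' : Fin k} (hjj : j ≠ j') (x : Fin n → ℝ)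
    (h1 : ∀ i, x i ∈ Set.Ioc ((Q j).lower i) ((Q j).upper i))
    (h2 : ∀ i, x i ∈ Set.Ioc ((Q j').lower i) ((Q j').upper i)) : False := by
  set ε := Finset.univ.inf' Finset.univ_nonempty
    (fun i => min (x i - (Q j).lower i) (x i - (Q j').lower i)) with hεdef
  have hε : 0 < ε := by
    rw [hεdef, Finset.lt_inf'_iff]
    intro i _
    exact lt_min (sub_pos.mpr (h1 i).1) (sub_pos.mpr (h2 i).1)
  have hyj : (fun i => x i - ε/2) ∈ interior (boxSet (Q j)) := by
    apply mem_interior_boxSet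
    intro i
    have hle : ε ≤ x i - (Q j).lower i :=
      le_trans (Finset.inf'_le _ (Finset.mem_univ i)) (min_le_left _ _)
    have hub := (h1 i).2
    constructor
    · linarith
    · linarith
  have hyj' : (fun i => x i - ε/2) ∈ interior (boxSet (Q j')) := by
    apply mem_interior_boxSet
    intro i
    have hle : ε ≤ x i - (Q j').lower i :=
      le_trans (Finset.inf'_le _ (Finset.mem_univ i)) (min_le_right _ _)
    have hub := (h2 i).2
    constructor
    · linarith
    · linarith
  exact Set.disjoint_left.mp (hpart.1 j j' hjj) hyj hyj'

lemma halfopen_exists {n k : ℕ} [Nonempty (Fin n)] (P : Box (Fin n)) (Q : Fin k → Box (Fin n))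
    (hpart : isBoxPartition P Q) (x : Fin n → ℝ)
    (hx : ∀ i, x i ∈ Set.Ioc (P.lower i) (P.upper i)) :
    ∃ j, ∀ i, x i ∈ Set.Ioc ((Q j).lower i) ((Q j).upper i) := by
  set ε := Finset.univ.inf' Finset.univ_nonempty (fun i => x i - P.lower i) with hεdef
  have hε : 0 < ε := by
    rw [hεdef, Finset.lt_inf'_iff]
    intro i _
    exact sub_pos.mpr (hx i).1
  have hy : ∀ m : ℕ, (fun i => x i - ε / (m+1)) ∈ boxSet P := by
    intro m
    rw [boxSet, Set.mem_Icc]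
    have hcast : (1:ℝ) ≤ (m:ℝ) + 1 := by
      have := Nat.cast_nonneg (α := ℝ) m
      linarith
    have hpos : 0 < ε / ((m:ℝ)+1) := by positivity
    constructor
    · intro i
      have hle : ε ≤ x i - P.lower i := Finset.inf'_le _ (Finset.mem_univ i)
      have h2 : ε / ((m:ℝ)+1) ≤ ε := div_le_self hε.le hcast
      show P.lower i ≤ x i - ε / ((m:ℝ)+1)
      linarith
    · intro i
      have := (hx i).2
      show x i - ε / ((m:ℝ)+1) ≤ P.upper i
      linarith
  have hchoice : ∀ m : ℕ, ∃ j, (fun i => x i - ε / (m+1)) ∈ boxSet (Q j) := by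
    intro m
    have h := hy m
    rw [← hpart.2] at h
    exact Set.mem_iUnion.mp h
  choose f hf using hchoice
  obtain ⟨j, hj⟩ := Finite.exists_infinite_fiber f
  have hinf : (f ⁻¹' {j}).Infinite := Set.infinite_coe_iff.mp hj
  refine ⟨j, fun i => ?_⟩
  constructor
  · obtain ⟨m0, hm0⟩ := hinf.nonempty
    have hm0' : f m0 = j := hm0
    have h := hf m0
    rw [hm0', boxSet, Set.mem_Icc] at h
    have hl := h.1 i
    have hpos : 0 < ε / ((m0:ℝ)+1) := by
      have hcast : (0:ℝ) < (m0:ℝ) + 1 := by positivity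
      positivity
    simp only at hl
    linarith
  · by_contra hgt
    push_neg at hgt
    set d := x i - (Q j).upper i with hd
    have hdpos : 0 < d := by rw [hd]; linarith
    obtain ⟨m, hmfib, hmgt⟩ := hinf.exists_gt (Nat.ceil (ε / d))
    have hm' : f m = j := hmfib
    have h := hf m
    rw [hm', boxSet, Set.mem_Icc] at h
    have hu := h.2 i
    simp only at hu
    have hceil : ε / d ≤ (Nat.ceil (ε / d) : ℝ) := Nat.le_ceil _
    have hmcast : (Nat.ceil (ε / d) : ℝ) < (m:ℝ) + 1 := by
      have : (Nat.ceil (ε / d) : ℝ) ≤ (m:ℝ) := by exact_mod_cast hmgt.le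
      linarith
    have hmpos : (0:ℝ) < (m:ℝ) + 1 := by positivity
    have hεd : ε / ((m:ℝ)+1) < d := by
      rw [div_lt_iff₀ hmpos]
      have h1 : ε / d < (m:ℝ) + 1 := lt_of_le_of_lt hceil hmcast
      calc ε = (ε / d) * d := by field_simp
      _ < ((m:ℝ)+1) * d := by exact mul_lt_mul_of_pos_right h1 hdpos
      _ = d * ((m:ℝ)+1) := by ring
    rw [hd] at hεd
    linarith

lemma expand {n k : ℕ} (X : Set ℝ) (P : Box (Fin n)) (Q : Fin k → Box (Fin n))
    (B : Box (Fin n)) :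
    ∏ i, K X P Q i (B.lower i) (B.upper i)
      = ∑ g ∈ Fintype.piFinset (fun i => grid P Q i),
          if (∀ i, g i ∈ Set.Ioc (B.lower i) (B.upper i)) then ∏ i, w X P Q i (g i) else 0 := by
  have h1 : ∀ i : Fin n, K X P Q i (B.lower i) (B.upper i)
      = ∑ t ∈ grid P Q i, if t ∈ Set.Ioc (B.lower i) (B.upper i) then w X P Q i t else 0 := by
    intro i
    rw [K, Finset.sum_filter]
  rw [Finset.prod_congr rfl (fun i _ => h1 i), Finset.prod_univ_sum]
  apply Finset.sum_congr rfl
  intro g _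
  by_cases hg : ∀ i, g i ∈ Set.Ioc (B.lower i) (B.upper i)
  · rw [if_pos hg]
    exact Finset.prod_congr rfl (fun i _ => if_pos (hg i))
  · rw [if_neg hg]
    push_neg at hg
    obtain ⟨i, hi⟩ := hg
    exact Finset.prod_eq_zero (Finset.mem_univ i) (if_neg hi)

lemma sum_prod_K {n k : ℕ} [Nonempty (Fin n)] (X : Set ℝ) (P : Box (Fin n))
    (Q : Fin k → Box (Fin n)) (hpart : isBoxPartition P Q) :
    ∑ j : Fin k, ∏ i, K X P Q i ((Q j).lower i) ((Q j).upper i)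
      = ∏ i, K X P Q i (P.lower i) (P.upper i) := by
  rw [expand X P Q P, Finset.sum_congr rfl (fun j _ => expand X P Q (Q j)), Finset.sum_comm]
  apply Finset.sum_congr rfl
  intro g _
  by_cases hgP : ∀ i, g i ∈ Set.Ioc (P.lower i) (P.upper i)
  · obtain ⟨j0, hj0⟩ := halfopen_exists P Q hpart g hgP
    rw [if_pos hgP, Finset.sum_eq_single j0]
    · rw [if_pos hj0]
    · intro j _ hne
      rw [if_neg]
      intro hj
      exact halfopen_unique P Q hpart hne g hj hj0
    · intro h
      exact absurd (Finset.mem_univ j0) h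
  · rw [if_neg hgP]
    apply Finset.sum_eq_zero
    intro j _
    rw [if_neg]
    intro hj
    exact hgP (fun i => ⟨lt_of_le_of_lt (coord_bounds P Q hpart j i).1 (hj i).1,
      le_trans (hj i).2 (coord_bounds P Q hpart j i).2⟩)

lemma prod_K_eq_zero {n k : ℕ} (X : Set ℝ) (P : Box (Fin n)) (Q : Fin k → Box (Fin n))
    {j : Fin k} (hside : hasSideIn X (Q j)) :
    ∏ i, K X P Q i ((Q j).lower i) ((Q j).upper i) = 0 := by
  obtain ⟨i, hiX⟩ := hside
  apply Finset.prod_eq_zero (Finset.mem_univ i)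
  rw [K_eq X P Q i (((grid P Q i).filter
      (fun t => t ∈ Set.Ioc ((Q j).lower i) ((Q j).upper i))).card)
    _ (Q_lower_mem_grid P Q j i) _ (Q_upper_mem_grid P Q j i)
    ((Q j).lower_lt_upper i).le (le_refl _)]
  rw [← phi_eq_of_step X P Q i (Q_lower_mem_grid P Q j i) (Q_upper_mem_grid P Q j i)
    (by rwa [abs_of_pos (sub_pos.mpr ((Q j).lower_lt_upper i))])]
  exact sub_self _

lemma K_P_eq {n k : ℕ} (X : Set ℝ) (hX : X ⊆ Set.Ioi 0)
    (hadd : ∀ x ∈ X, ∀ y ∈ X, x + y ∈ X)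
    (hop : ∀ x ∈ X, ∀ y ∈ X, ∀ z ∈ X, x + y + z - 2 * min x (min y z) ∈ X)
    (P : Box (Fin n)) (Q : Fin k → Box (Fin n)) (hpart : isBoxPartition P Q) (i : Fin n)
    (hno : P.upper i - P.lower i ∉ X) :
    K X P Q i (P.lower i) (P.upper i) = -1 := by
  rw [K_eq X P Q i (((grid P Q i).filter
      (fun t => t ∈ Set.Ioc (P.lower i) (P.upper i))).card)
    _ (P_lower_mem_grid P Q i) _ (P_upper_mem_grid P Q i)
    (P.lower_lt_upper i).le (le_refl _)]
  have hphil : phi X P Q i (P.lower i) = 1 := by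
    rw [phi, if_pos]
    exact ⟨0, fun _ => P.lower i, rfl, rfl, fun m _ => P_lower_mem_grid P Q i,
      fun m hm => absurd hm (Nat.not_lt_zero m)⟩
  have hphiu : phi X P Q i (P.upper i) = 0 := by
    rw [phi, if_neg]
    rintro ⟨p, a, h0, hp, hg, hs⟩
    rcases Nat.eq_zero_or_pos p with hp0 | hp0
    · subst hp0
      rw [h0] at hp
      exact absurd hp (ne_of_lt (P.lower_lt_upper i))
    · apply hno
      have key := chain_lemma X hX hadd hop p (fun m => a m - P.lower i) hp0
        (by show a 0 - P.lower i = 0; rw [h0]; ring)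
        (by
          intro m hm
          have hgm := grid_subset P Q hpart i _ (hg m hm)
          constructor
          · show 0 ≤ a m - P.lower i
            linarith [hgm.1]
          · show a m - P.lower i ≤ a p - P.lower i
            rw [hp]
            linarith [hgm.2])
        (by
          intro m hm
          show |(a (m+1) - P.lower i) - (a m - P.lower i)| ∈ X
          simpa [sub_sub_sub_cancel_right] using hs m hm)
      have key' : a p - P.lower i ∈ X := key
      rw [hp] at key'
      exact key'
  rw [hphil, hphiu]
  norm_num

end WPf

theorem closed_implies_propertyW (n : ℕ) (hn : 2 ≤ n) (X : Set ℝ) (hX : X ⊆ Set.Ioi 0)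
    (hadd : ∀ x ∈ X, ∀ y ∈ X, x + y ∈ X)
    (hop : ∀ x ∈ X, ∀ y ∈ X, ∀ z ∈ X, x + y + z - 2 * min x (min y z) ∈ X) :
    PropertyW n X := by
  intro P k Q hpart hsides
  haveI : Nonempty (Fin n) := ⟨⟨0, by omega⟩⟩
  by_contra hcon
  simp only [hasSideIn, not_exists] at hcon
  have h1 : (0:ℝ) = (-1)^n := by
    calc (0:ℝ) = ∑ j : Fin k, ∏ i, WPf.K X P Q i ((Q j).lower i) ((Q j).upper i) :=
          (Finset.sum_eq_zero fun j _ => WPf.prod_K_eq_zero X P Q (hsides j)).symm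
    _ = ∏ i, WPf.K X P Q i (P.lower i) (P.upper i) := WPf.sum_prod_K X P Q hpart
    _ = ∏ _i : Fin n, (-1:ℝ) := Finset.prod_congr rfl fun i _ =>
          WPf.K_P_eq X hX hadd hop P Q hpart i (hcon i)
    _ = (-1)^n := by rw [Finset.prod_const]; simp
  have h2 := pow_ne_zero n (by norm_num : (-1:ℝ) ≠ 0)
  exact h2 h1.symm
end

section
/- Let n ≥ 2, let X ⊆ (0,∞), let P be an n-dimensional box, and suppose P admits a partition into boxes P_1, …, P_k such that each P_k has a side with length in X. Then there exist a coordinate direction j ∈ {1,…,n} and points y_1, y_2, …, y_m in the interval [a_j, b_j] (where (a_j, b_j) are the endpoints of the j-th side of P) such that y_1 = a_j, y_m = b_j, and |y_i − y_{i+1}| ∈ X for every i with 1 ≤ i < m. -/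
open BoxIntegral

namespace ChainAux

open Set

/-- One step of the chain: `z` is in `[a,b]` and at `X`-distance from `y`. -/
def stepRel (a b : ℝ) (X : Set ℝ) (y z : ℝ) : Prop :=
  z ∈ Set.Icc a b ∧ |y - z| ∈ X

/-- The set of points reachable by chains from `a` inside `[a,b]`. -/
def reach (a b : ℝ) (X : Set ℝ) : Set ℝ :=
  {y | Relation.ReflTransGen (stepRel a b X) a y}

lemma base_mem_reach (a b : ℝ) (X : Set ℝ) : a ∈ reach a b X :=
  Relation.ReflTransGen.refl

lemma reach_iff_of_step {a b u v : ℝ} {X : Set ℝ} (hu : u ∈ Set.Icc a b)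
    (hv : v ∈ Set.Icc a b) (h : |u - v| ∈ X) :
    u ∈ reach a b X ↔ v ∈ reach a b X := by
  constructor
  · intro hr; exact hr.tail ⟨hv, h⟩
  · intro hr; exact hr.tail ⟨hu, by rwa [abs_sub_comm]⟩

open scoped Classical in
/-- Indicator of the reachable set. -/
noncomputable def G (a b : ℝ) (X : Set ℝ) (y : ℝ) : ℝ :=
  if y ∈ reach a b X then 1 else 0

lemma G_eq_of_step {a b u v : ℝ} {X : Set ℝ} (hu : u ∈ Set.Icc a b)
    (hv : v ∈ Set.Icc a b) (h : |u - v| ∈ X) :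
    G a b X u = G a b X v := by
  classical
  simp only [G]
  by_cases hc : u ∈ reach a b X
  · rw [if_pos hc, if_pos ((reach_iff_of_step hu hv h).1 hc)]
  · rw [if_neg hc, if_neg (fun hc' => hc ((reach_iff_of_step hu hv h).2 hc'))]

lemma G_base (a b : ℝ) (X : Set ℝ) : G a b X a = 1 := by
  classical
  simp [G, base_mem_reach]

lemma mem_reach_of_G_eq_one {a b y : ℝ} {X : Set ℝ} (h : G a b X y = 1) :
    y ∈ reach a b X := by
  classical
  by_contra hc
  simp only [G, if_neg hc] at h
  norm_num at h

/-- The product box function. -/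
noncomputable def gFun {n : ℕ} (P : Box (Fin n)) (X : Set ℝ) (J : Box (Fin n)) : ℝ :=
  ∏ i : Fin n,
    (G (P.lower i) (P.upper i) X (J.upper i) - G (P.lower i) (P.upper i) X (J.lower i))

/-- `gFun` is box additive. -/
noncomputable def gMap {n : ℕ} (P : Box (Fin n)) (X : Set ℝ) :
    BoxIntegral.BoxAdditiveMap (Fin n) ℝ ⊤ :=
  BoxAdditiveMap.ofMapSplitAdd (gFun P X) ⊤ (by
    classical
    intro J _ i x hx
    simp only [Box.splitLower_def hx, Box.splitUpper_def hx, ← WithBot.some_eq_coe,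
      Option.elim']
    simp only [gFun]
    rw [Finset.prod_eq_mul_prod_sdiff_singleton_of_mem (Finset.mem_univ i),
        Finset.prod_eq_mul_prod_sdiff_singleton_of_mem (Finset.mem_univ i),
        Finset.prod_eq_mul_prod_sdiff_singleton_of_mem (Finset.mem_univ i)]
    have h1 : ∀ j ∈ Finset.univ \ {i},
        (G (P.lower j) (P.upper j) X ((Function.update J.upper i x) j)
          - G (P.lower j) (P.upper j) X (J.lower j))
        = (G (P.lower j) (P.upper j) X (J.upper j)
          - G (P.lower j) (P.upper j) X (J.lower j)) := by
      intro j hj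
      have hji : j ≠ i := by
        simp only [Finset.mem_sdiff, Finset.mem_singleton] at hj
        exact hj.2
      rw [Function.update_of_ne hji]
    have h2 : ∀ j ∈ Finset.univ \ {i},
        (G (P.lower j) (P.upper j) X (J.upper j)
          - G (P.lower j) (P.upper j) X ((Function.update J.lower i x) j))
        = (G (P.lower j) (P.upper j) X (J.upper j)
          - G (P.lower j) (P.upper j) X (J.lower j)) := by
      intro j hj
      have hji : j ≠ i := by
        simp only [Finset.mem_sdiff, Finset.mem_singleton] at hj
        exact hj.2
      rw [Function.update_of_ne hji]
    rw [Finset.prod_congr rfl h1, Finset.prod_congr rfl h2]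
    simp only [Function.update_self]
    ring)

lemma gMap_apply {n : ℕ} (P : Box (Fin n)) (X : Set ℝ) (J : Box (Fin n)) :
    gMap P X J = gFun P X J := rfl

/-- Extracting a chain of points from reachability. -/
lemma exists_chain {a b y : ℝ} {X : Set ℝ} (hab : a ≤ b) (h : y ∈ reach a b X) :
    ∃ (m : ℕ) (Y : ℕ → ℝ), 1 ≤ m ∧
      (∀ i, 1 ≤ i → i ≤ m → Y i ∈ Set.Icc a b) ∧
      Y 1 = a ∧ Y m = y ∧
      (∀ i, 1 ≤ i → i < m → |Y i - Y (i + 1)| ∈ X) := by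
  induction h with
  | refl =>
    exact ⟨1, fun _ => a, le_rfl, fun i _ _ => ⟨le_rfl, hab⟩, rfl, rfl,
      fun i h1 h2 => absurd h2 (by omega)⟩
  | @tail y z hy hyz ih =>
    obtain ⟨m, Y, hm, hmem, hY1, hYm, hst⟩ := ih
    refine ⟨m + 1, fun t => if t ≤ m then Y t else z, by omega, ?_, ?_, ?_, ?_⟩
    · intro i h1 h2
      by_cases hc : i ≤ m
      · simp only [if_pos hc]; exact hmem i h1 hc
      · simp only [if_neg hc]; exact hyz.1
    · simp only [if_pos hm]; exact hY1
    · simp only [if_neg (by omega : ¬ m + 1 ≤ m)]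
    · intro i h1 h2
      by_cases hc : i < m
      · simp only [if_pos hc.le, if_pos (by omega : i + 1 ≤ m)]
        exact hst i h1 hc
      · have hi : i = m := by omega
        subst hi
        simp only [if_pos le_rfl, if_neg (by omega : ¬ i + 1 ≤ i)]
        rw [hYm]
        exact hyz.2

end ChainAux

open ChainAux Set

theorem exists_chain_of_points (n : ℕ) (hn : 2 ≤ n) (X : Set ℝ) (hX : X ⊆ Set.Ioi 0)
    (P : Box (Fin n)) (k : ℕ) (Q : Fin k → Box (Fin n))
    (hpart : isBoxPartition P Q) (hside : ∀ j, hasSideIn X (Q j)) :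
    ∃ (j : Fin n) (m : ℕ) (Y : ℕ → ℝ),
      2 ≤ m ∧
      (∀ i, 1 ≤ i → i ≤ m → Y i ∈ Set.Icc (P.lower j) (P.upper j)) ∧
      Y 1 = P.lower j ∧ Y m = P.upper j ∧
      (∀ i, 1 ≤ i → i < m → |Y i - Y (i + 1)| ∈ X) := by
  classical
  have hne : Nonempty (Fin n) := ⟨⟨0, by omega⟩⟩
  -- each Q j is a subbox of P
  have hsub : ∀ j, boxSet (Q j) ⊆ boxSet P := by
    intro j
    rw [← hpart.2]
    exact Set.subset_iUnion (fun j => boxSet (Q j)) j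
  have hle : ∀ j, Q j ≤ P := by
    intro j
    have h1 := hsub j (Set.left_mem_Icc.2 (Q j).lower_le_upper)
    have h2 := hsub j (Set.right_mem_Icc.2 (Q j).lower_le_upper)
    rw [boxSet, Set.mem_Icc] at h1 h2
    exact Box.le_iff_bounds.2 ⟨h1.1, h2.2⟩
  -- disjointness of the half-open boxes
  have hdisj : ∀ j j' : Fin k, Q j ≠ Q j' →
      Disjoint ((Q j : Set (Fin n → ℝ))) ((Q j' : Set (Fin n → ℝ))) := by
    intro j j' hne'
    have hjj' : j ≠ j' := fun h => hne' (by rw [h])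
    have hd := hpart.1 j j' hjj'
    rw [Set.disjoint_left]
    intro x hxA hxB
    have hxA' : ∀ i, x i ∈ Set.Ioc ((Q j).lower i) ((Q j).upper i) := hxA
    have hxB' : ∀ i, x i ∈ Set.Ioc ((Q j').lower i) ((Q j').upper i) := hxB
    set ε := (Finset.univ.inf' Finset.univ_nonempty
      fun i => min (x i - (Q j).lower i) (x i - (Q j').lower i)) / 2 with hεdef
    have hε2 : 0 < (Finset.univ.inf' Finset.univ_nonempty
        fun i => min (x i - (Q j).lower i) (x i - (Q j').lower i)) := by
      rw [Finset.lt_inf'_iff]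
      intro i _
      exact lt_min (sub_pos.2 (hxA' i).1) (sub_pos.2 (hxB' i).1)
    have hε : 0 < ε := by positivity
    have hεlt : ∀ i, ε < x i - (Q j).lower i ∧ ε < x i - (Q j').lower i := by
      intro i
      have hle' := Finset.inf'_le (f := fun i => min (x i - (Q j).lower i)
        (x i - (Q j').lower i)) (Finset.mem_univ i)
      constructor
      · have : ε < ε * 2 := by linarith
        calc ε < ε * 2 := this
        _ ≤ min (x i - (Q j).lower i) (x i - (Q j').lower i) := by
            rw [hεdef]; rw [div_mul_cancel₀]
            · exact hle'
            · norm_num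
        _ ≤ x i - (Q j).lower i := min_le_left _ _
      · have : ε < ε * 2 := by linarith
        calc ε < ε * 2 := this
        _ ≤ min (x i - (Q j).lower i) (x i - (Q j').lower i) := by
            rw [hεdef]; rw [div_mul_cancel₀]
            · exact hle'
            · norm_num
        _ ≤ x i - (Q j').lower i := min_le_right _ _
    set y : Fin n → ℝ := fun i => x i - ε with hy
    have hmem : ∀ (B : Box (Fin n)), (∀ i, B.lower i < y i ∧ y i < B.upper i) →
        y ∈ interior (boxSet B) := by
      intro B hB
      have hopen : IsOpen (Set.univ.pi fun i => Set.Ioo (B.lower i) (B.upper i)) :=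
        isOpen_set_pi Set.finite_univ fun i _ => isOpen_Ioo
      have hss : (Set.univ.pi fun i => Set.Ioo (B.lower i) (B.upper i)) ⊆ boxSet B := by
        intro z hz
        rw [boxSet, Set.mem_Icc]
        exact ⟨fun i => (hz i trivial).1.le, fun i => (hz i trivial).2.le⟩
      exact interior_maximal hss hopen fun i _ => ⟨(hB i).1, (hB i).2⟩
    have hyA : y ∈ interior (boxSet (Q j)) := by
      apply hmem
      intro i
      constructor
      · have := (hεlt i).1; simp only [hy]; linarith
      · have := (hxA' i).2; simp only [hy]; linarith
    have hyB : y ∈ interior (boxSet (Q j')) := by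
      apply hmem
      intro i
      constructor
      · have := (hεlt i).2; simp only [hy]; linarith
      · have := (hxB' i).2; simp only [hy]; linarith
    exact Set.disjoint_left.1 hd hyA hyB
  -- every point of the half-open box P is in some half-open Q j
  have hcover : ∀ x : Fin n → ℝ, x ∈ P → ∃ j : Fin k, x ∈ Q j := by
    intro x hx
    have hx' : ∀ i, x i ∈ Set.Ioc (P.lower i) (P.upper i) := hx
    set δ := Finset.univ.inf' Finset.univ_nonempty (fun i => x i - P.lower i) with hδdef
    have hδ : 0 < δ := by
      rw [hδdef, Finset.lt_inf'_iff]
      intro i _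
      exact sub_pos.2 (hx' i).1
    have hmem : ∀ m : ℕ, ∃ j : Fin k,
        (fun i => x i - δ / (m + 1)) ∈ boxSet (Q j) := by
      intro m
      have hεm : 0 < δ / (m + 1) := by positivity
      have hεm' : δ / (m + 1) ≤ δ := by
        apply div_le_self hδ.le
        have : (0 : ℝ) ≤ m := Nat.cast_nonneg m
        linarith
      have hxm : (fun i => x i - δ / (m + 1)) ∈ boxSet P := by
        rw [boxSet, Set.mem_Icc]
        constructor
        · intro i
          have h1 : δ ≤ x i - P.lower i :=
            Finset.inf'_le (f := fun i => x i - P.lower i) (Finset.mem_univ i)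
          simp only
          linarith
        · intro i
          have := (hx' i).2
          simp only
          linarith
      rw [← hpart.2] at hxm
      simpa using hxm
    choose f hf using hmem
    obtain ⟨j, hj⟩ := Finite.exists_infinite_fiber f
    have hjinf : (f ⁻¹' {j}).Infinite := Set.infinite_coe_iff.1 hj
    refine ⟨j, fun i => ?_⟩
    obtain ⟨m0, hm0⟩ := hjinf.nonempty
    have hm0' : f m0 = j := hm0
    have hf0 := hf m0
    rw [hm0', boxSet, Set.mem_Icc] at hf0
    constructor
    · -- lower bound, strict
      have h1 := hf0.1 i
      have hδm : 0 < δ / (m0 + 1) := by positivity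
      simp only at h1
      linarith
    · -- upper bound
      by_contra hub
      push_neg at hub
      set c := x i - (Q j).upper i with hc
      have hcpos : 0 < c := by rw [hc]; linarith
      obtain ⟨m1, hm1mem, hm1⟩ := hjinf.exists_gt ⌈δ / c⌉₊
      have hm1' : f m1 = j := hm1mem
      have hfm1 := hf m1
      rw [hm1', boxSet, Set.mem_Icc] at hfm1
      have h2 := hfm1.2 i
      simp only at h2
      have hcd : δ / c < m1 + 1 := by
        have h3 : δ / c ≤ (⌈δ / c⌉₊ : ℝ) := Nat.le_ceil _
        have h4 : (⌈δ / c⌉₊ : ℝ) < (m1 : ℝ) := by exact_mod_cast hm1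
        linarith
      have h5 : δ / (m1 + 1) < c := by
        rw [div_lt_iff₀ (by positivity)]
        rw [div_lt_iff₀ hcpos] at hcd
        linarith [hcd]
      rw [hc] at h5
      linarith
  -- build the prepartition
  let π : Prepartition P :=
    ⟨Finset.univ.image Q,
     by
       intro J hJ
       obtain ⟨j, _, rfl⟩ := Finset.mem_image.1 hJ
       exact hle j,
     by
       intro J hJ J' hJ' hne'
       obtain ⟨j, _, rfl⟩ := Finset.mem_image.1 hJ
       obtain ⟨j', _, rfl⟩ := Finset.mem_image.1 hJ'
       exact hdisj j j' hne'⟩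
  have hπ : π.IsPartition := by
    intro x hx
    obtain ⟨j, hj⟩ := hcover x hx
    exact ⟨Q j, Finset.mem_image_of_mem Q (Finset.mem_univ j), hj⟩
  have hsum := (gMap P X).sum_partition_boxes le_top hπ
  have hzero : ∀ J ∈ π.boxes, gMap P X J = 0 := by
    intro J hJ
    obtain ⟨j, _, rfl⟩ := Finset.mem_image.1 hJ
    obtain ⟨i, hi⟩ := hside j
    rw [gMap_apply, gFun]
    apply Finset.prod_eq_zero (Finset.mem_univ i)
    have hbounds := Box.le_iff_bounds.1 (hle j)
    have hl : (Q j).lower i ∈ Set.Icc (P.lower i) (P.upper i) :=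
      ⟨hbounds.1 i, ((Q j).lower_le_upper i).trans (hbounds.2 i)⟩
    have hu : (Q j).upper i ∈ Set.Icc (P.lower i) (P.upper i) :=
      ⟨(hbounds.1 i).trans ((Q j).lower_le_upper i), hbounds.2 i⟩
    have habs : |(Q j).upper i - (Q j).lower i| ∈ X := by
      rwa [abs_of_nonneg (sub_nonneg.2 ((Q j).lower_le_upper i))]
    rw [G_eq_of_step hu hl habs]
    ring
  rw [Finset.sum_eq_zero hzero] at hsum
  -- hsum : 0 = gMap P X P
  have hP0 : gFun P X P = 0 := by rw [← gMap_apply, ← hsum]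
  rw [gFun] at hP0
  obtain ⟨i, _, hi0⟩ := Finset.prod_eq_zero_iff.1 hP0
  have hG : G (P.lower i) (P.upper i) X (P.upper i) = 1 := by
    have hbase := G_base (P.lower i) (P.upper i) X
    linarith [sub_eq_zero.1 hi0, hbase]
  have hreach : P.upper i ∈ reach (P.lower i) (P.upper i) X :=
    mem_reach_of_G_eq_one hG
  obtain ⟨m, Y, hm, hmem, hY1, hYm, hst⟩ :=
    exists_chain (P.lower_le_upper i) hreach
  have hm2 : 2 ≤ m := by
    by_contra h
    have hm1 : m = 1 := by omega
    have : P.lower i = P.upper i := by rw [← hY1, ← hYm, hm1]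
    exact absurd this (P.lower_lt_upper i).ne
  exact ⟨i, m, Y, hm2, hmem, hY1, hYm, hst⟩
end

section
/- Let n ≥ 2 and let P be an n-dimensional box admitting a partition into boxes each of which has at least one side of positive integer length. Then P has at least one side of positive integer length. -/
open BoxIntegral

/-!
The integral of `x ↦ ∏ i, exp (2πi xᵢ)` over a box is the product of the one-dimensional
integrals `∫ₐᵇ exp (2πi t) dt = (exp (2πi b) - exp (2πi a)) / 2πi`, so it vanishes exactly when
some side of the box has integer length. The integral is additive over a partition, so it
vanishes on `P` because it vanishes on every box of the partition (de Bruijn).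
-/

open MeasureTheory Complex Set Function Real

section BoxPartition

variable {n k : ℕ}

theorem interior_boxSet_s12 (B : Box (Fin n)) : interior (boxSet B) = Box.Ioo B := by
  rw [boxSet, ← pi_univ_Icc, interior_pi_set finite_univ]
  simp only [interior_Icc]
  rfl

theorem interior_boxSet_ae_eq (B : Box (Fin n)) : interior (boxSet B) =ᵐ[volume] boxSet B :=
  interior_boxSet_s12 B ▸ B.Ioo_ae_eq_Icc

theorem setIntegral_boxSet_eq_sum {E : Type*} [NormedAddCommGroup E] [NormedSpace ℝ E]
    {P : Box (Fin n)} {Q : Fin k → Box (Fin n)} (hpart : isBoxPartition P Q)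
    {f : (Fin n → ℝ) → E} (hf : IntegrableOn f (boxSet P)) :
    ∫ x in boxSet P, f x = ∑ j, ∫ x in boxSet (Q j), f x := by
  have hdisj : Pairwise (AEDisjoint volume on fun j => boxSet (Q j)) := fun j j' hjj' =>
    ((hpart.1 j j' hjj').aedisjoint).congr (interior_boxSet_ae_eq _).symm
      (interior_boxSet_ae_eq _).symm
  rw [← hpart.2] at hf ⊢
  exact (integral_iUnion_ae (fun j => measurableSet_Icc.nullMeasurableSet) hdisj hf).trans
    (tsum_fintype _)

end BoxPartition

theorem setIntegral_Icc_pi_prod {ι 𝕜 : Type*} [Fintype ι] [RCLike 𝕜] (a b : ι → ℝ)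
    (f : ι → ℝ → 𝕜) :
    ∫ x in Icc a b, ∏ i, f i (x i) = ∏ i, ∫ t in Icc (a i) (b i), f i t := by
  rw [← pi_univ_Icc, volume_pi, Measure.restrict_pi_pi, integral_fintype_prod_eq_prod]

theorem setIntegral_Icc_exp_two_pi_I_mul_eq_zero_iff {a b : ℝ} (hab : a ≤ b) :
    ∫ t in Icc a b, exp (2 * π * I * t) = 0 ↔ ∃ m : ℤ, b - a = m := by
  have hc : 2 * π * I ≠ 0 := by simp [pi_ne_zero, I_ne_zero]
  rw [integral_Icc_eq_integral_Ioc, ← intervalIntegral.integral_of_le hab,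
    integral_exp_mul_complex hc, div_eq_zero_iff, or_iff_left hc, sub_eq_zero,
    exp_eq_exp_iff_exists_int]
  refine exists_congr fun m => ?_
  rw [← sub_eq_iff_eq_add', ← mul_sub, mul_comm (m : ℂ), mul_right_inj' hc, ← ofReal_sub,
    ← ofReal_intCast, ofReal_inj]

theorem exists_int_eq_iff_exists_pos_nat {d : ℝ} (hd : 0 < d) :
    (∃ m : ℤ, d = m) ↔ ∃ m : ℕ, 0 < m ∧ d = m := by
  constructor
  · rintro ⟨m, rfl⟩
    have hm : 0 < m := by exact_mod_cast hd
    exact ⟨m.toNat, by omega, by rw [← Int.cast_natCast, Int.toNat_of_nonneg hm.le]⟩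
  · rintro ⟨m, -, rfl⟩
    exact ⟨m, by simp⟩

theorem setIntegral_boxSet_prod_exp_eq_zero_iff {n : ℕ} (B : Box (Fin n)) :
    ∫ x in boxSet B, ∏ i, exp (2 * π * I * x i) = 0 ↔
      ∃ i, ∃ m : ℕ, 0 < m ∧ B.upper i - B.lower i = m := by
  rw [boxSet, setIntegral_Icc_pi_prod B.lower B.upper fun _ t => exp (2 * π * I * t),
    Finset.prod_eq_zero_iff]
  simp only [Finset.mem_univ, true_and]
  refine exists_congr fun i => ?_
  rw [setIntegral_Icc_exp_two_pi_I_mul_eq_zero_iff (B.lower_le_upper i),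
    exists_int_eq_iff_exists_pos_nat (sub_pos.2 (B.lower_lt_upper i))]

theorem partition_integer_side_general (n : ℕ) (P : Box (Fin n))
    (k : ℕ) (Q : Fin k → Box (Fin n)) (hpart : isBoxPartition P Q)
    (hside : ∀ j, ∃ i : Fin n, ∃ c : ℕ, 0 < c ∧ (Q j).upper i - (Q j).lower i = c) :
    ∃ i : Fin n, ∃ c : ℕ, 0 < c ∧ P.upper i - P.lower i = c := by
  have hcont : Continuous fun x : Fin n → ℝ => ∏ i, exp (2 * π * I * x i) := by fun_prop
  rw [← setIntegral_boxSet_prod_exp_eq_zero_iff,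
    setIntegral_boxSet_eq_sum hpart (hcont.continuousOn.integrableOn_compact isCompact_Icc)]
  exact Finset.sum_eq_zero fun j _ => (setIntegral_boxSet_prod_exp_eq_zero_iff (Q j)).2 (hside j)

theorem partition_integer_side (n : ℕ) (hn : 2 ≤ n) (P : Box (Fin n))
    (k : ℕ) (Q : Fin k → Box (Fin n)) (hpart : isBoxPartition P Q)
    (hside : ∀ j, ∃ i : Fin n, ∃ c : ℕ, 0 < c ∧ (Q j).upper i - (Q j).lower i = c) :
    ∃ i : Fin n, ∃ c : ℕ, 0 < c ∧ P.upper i - P.lower i = c :=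
  partition_integer_side_general n P k Q hpart hside
end
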